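/- arXiv:2310.12427 — 2 statements merged into one kernel-verified Lean document; each statement's English description precedes it below -/
import Mathlib

section
/- Let Φ be the standard normal CDF, a_U > 0 > a_L, and b_L, b_U ∈ ℝ. Then n ↦ Φ(a_U√n + b_U) − Φ(a_L√n + b_L) is strictly increasing for sufficiently large n > 0, and converges to 1 as n → ∞. -/
/-!
Φ is the CDF of a measure under which every nondegenerate interval has positive mass (the Gaussian
dominates Lebesgue measure), so Φ is strictly increasing. As n grows, `aU * √n + bU` strictly
increases to `+∞` and `aL * √n + bL` strictly decreases to `-∞`, so the difference strictly increases
on `n ≥ 0` and tends to `1 - 0`.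
-/

open MeasureTheory ProbabilityTheory Filter

/-- The standard normal cumulative distribution function. -/
noncomputable def stdNormCDF (x : ℝ) : ℝ := ((gaussianReal 0 1) (Set.Iic x)).toReal

lemma strictMono_cdf_of_absolutelyContinuous {μ : Measure ℝ} [IsProbabilityMeasure μ]
    (hμ : volume ≪ μ) : StrictMono (cdf μ) := by
  intro x y hxy
  have hvol : volume (Set.Ioc x y) ≠ 0 := by simpa [Real.volume_Ioc] using hxy
  have hμIoc : ENNReal.ofReal (cdf μ y - cdf μ x) ≠ 0 := by
    rw [← StieltjesFunction.measure_Ioc, measure_cdf]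
    exact fun h ↦ hvol (hμ h)
  simpa using hμIoc

lemma stdNormCDF_eq_cdf : stdNormCDF = cdf (gaussianReal 0 1) := by
  ext x
  rw [cdf_eq_real, measureReal_def, stdNormCDF]

lemma stdNormCDF_strictMono : StrictMono stdNormCDF :=
  stdNormCDF_eq_cdf ▸ strictMono_cdf_of_absolutelyContinuous
    (gaussianReal_absolutelyContinuous' 0 one_ne_zero)

lemma StrictMono.strictMonoOn_sub_comp_sqrt {F : ℝ → ℝ} (hF : StrictMono F) {aU aL : ℝ}
    (haU : 0 < aU) (haL : aL < 0) (bU bL : ℝ) :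
    StrictMonoOn (fun n ↦ F (aU * √n + bU) - F (aL * √n + bL)) (Set.Ici 0) := by
  intro m hm n hn hmn
  have hsqrt : √m < √n := Real.strictMonoOn_sqrt hm hn hmn
  have hU : F (aU * √m + bU) < F (aU * √n + bU) := hF (by nlinarith)
  have hL : F (aL * √n + bL) < F (aL * √m + bL) := hF (by nlinarith)
  dsimp only
  linarith

lemma tendsto_sub_comp_sqrt_atTop {F : ℝ → ℝ} {c d : ℝ} (htop : Tendsto F atTop (nhds c))
    (hbot : Tendsto F atBot (nhds d)) {aU aL : ℝ} (haU : 0 < aU) (haL : aL < 0) (bU bL : ℝ) :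
    Tendsto (fun n ↦ F (aU * √n + bU) - F (aL * √n + bL)) atTop (nhds (c - d)) := by
  have hU : Tendsto (fun n ↦ aU * √n + bU) atTop atTop :=
    tendsto_atTop_add_const_right _ bU (Real.tendsto_sqrt_atTop.const_mul_atTop haU)
  have hL : Tendsto (fun n ↦ aL * √n + bL) atTop atBot :=
    tendsto_atBot_add_const_right _ bL (Real.tendsto_sqrt_atTop.const_mul_atTop_of_neg haL)
  exact (htop.comp hU).sub (hbot.comp hL)

/-- For a_U > 0 > a_L, the difference Φ(a_U√n + b_U) - Φ(a_L√n + b_L) is strictly increasing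
for sufficiently large n > 0 and converges to 1 as n → ∞. -/
theorem phi_difference_eventually_strictMono_and_tendsto_one
    (aU aL bU bL : ℝ) (haU : 0 < aU) (haL : aL < 0) :
    (∃ N : ℝ, 0 < N ∧ StrictMonoOn
        (fun n : ℝ => stdNormCDF (aU * Real.sqrt n + bU) - stdNormCDF (aL * Real.sqrt n + bL))
        (Set.Ici N)) ∧
    Tendsto (fun n : ℝ => stdNormCDF (aU * Real.sqrt n + bU) - stdNormCDF (aL * Real.sqrt n + bL))
      atTop (nhds 1) := by
  refine ⟨⟨1, one_pos, ?_⟩, ?_⟩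
  · exact (stdNormCDF_strictMono.strictMonoOn_sub_comp_sqrt haU haL bU bL).mono
      (Set.Ici_subset_Ici.mpr zero_le_one)
  · simpa only [stdNormCDF_eq_cdf, sub_zero] using
      tendsto_sub_comp_sqrt_atTop (tendsto_cdf_atTop _) (tendsto_cdf_atBot _) haU haL bU bL
end

section
/- Let (X_n) be random variables with √n(X_n − θ0) converging in distribution to N(0, σ²) with σ > 0, and fix δ > θ0, γ ∈ (0,1), and c > 0. Define the power π_n = Pr(Φ(√n(δ − X_n)c) ≥ γ). Then π_n → 1 as n → ∞. -/
/-! If `c > 0` and `Φ q ≥ γ`, then `Φ(√n (δ - X_n) c) ≥ γ` as soon as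
`√n (X_n - θ₀) ≤ √n (δ - θ₀) - q / c`. The right-hand side tends to `+∞` because `δ > θ₀`,
while `√n (X_n - θ₀)` converges in distribution and is therefore bounded in probability, so the
probability of this event tends to `1`. -/

open MeasureTheory ProbabilityTheory Filter

lemma monotone_stdNormCDF : Monotone stdNormCDF :=
  stdNormCDF_eq_cdf ▸ monotone_cdf _

lemma tendsto_stdNormCDF_atTop : Tendsto stdNormCDF atTop (nhds 1) :=
  stdNormCDF_eq_cdf ▸ tendsto_cdf_atTop _

section

variable {Ω ι : Type*} [MeasurableSpace Ω] {μ : Measure Ω} [IsProbabilityMeasure μ]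
  {l : Filter ι}

lemma tendsto_measureReal_one_of_subset {s t : ι → Set Ω}
    (hst : ∀ᶠ i in l, s i ⊆ t i) (hs : Tendsto (fun i => μ.real (s i)) l (nhds 1)) :
    Tendsto (fun i => μ.real (t i)) l (nhds 1) :=
  tendsto_of_tendsto_of_tendsto_of_le_of_le' hs tendsto_const_nhds
    (hst.mono fun _ h => measureReal_mono h) (Eventually.of_forall fun _ => measureReal_le_one)

lemma tendsto_measureReal_le_of_tendsto_atTop {Y : ι → Ω → ℝ} {F : ℝ → ℝ}
    (hF : Tendsto F atTop (nhds 1))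
    (hY : ∀ x, Tendsto (fun i => μ.real {ω | Y i ω ≤ x}) l (nhds (F x)))
    {a : ι → ℝ} (ha : Tendsto a l atTop) :
    Tendsto (fun i => μ.real {ω | Y i ω ≤ a i}) l (nhds 1) := by
  refine tendsto_order.2 ⟨fun b hb => ?_, fun b hb =>
    Eventually.of_forall fun _ => measureReal_le_one.trans_lt hb⟩
  obtain ⟨x, hx⟩ := (hF.eventually (eventually_gt_nhds hb)).exists
  filter_upwards [(hY x).eventually (eventually_gt_nhds hx), ha.eventually_ge_atTop x]
    with i hi hxa
  exact hi.trans_le (measureReal_mono fun ω (hω : Y i ω ≤ x) => hω.trans hxa)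

end

theorem power_consistency_one_sided_general
    {Ω : Type*} [MeasurableSpace Ω] (μ : Measure Ω) [IsProbabilityMeasure μ]
    (X : ℕ → Ω → ℝ) (θ0 δ σ γ c : ℝ) (hσ : 0 < σ) (hδ : θ0 < δ)
    (hγ1 : γ < 1) (hc : 0 < c)
    (hX : ∀ x : ℝ,
      Tendsto (fun n : ℕ => (μ {ω | Real.sqrt n * (X n ω - θ0) ≤ x}).toReal) atTop
        (nhds (stdNormCDF (x / σ)))) :
    Tendsto (fun n : ℕ =>
        (μ {ω | γ ≤ stdNormCDF (Real.sqrt n * (δ - X n ω) * c)}).toReal) atTop (nhds 1) := by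
  obtain ⟨q, hq⟩ := (tendsto_stdNormCDF_atTop.eventually (eventually_ge_nhds hγ1)).exists
  have hF : Tendsto (fun x => stdNormCDF (x / σ)) atTop (nhds 1) :=
    tendsto_stdNormCDF_atTop.comp (tendsto_id.atTop_div_const hσ)
  have ha : Tendsto (fun n : ℕ => Real.sqrt n * (δ - θ0) - q / c) atTop atTop :=
    tendsto_atTop_add_const_right _ _ <|
      (Real.tendsto_sqrt_atTop.comp tendsto_natCast_atTop_atTop).atTop_mul_const (sub_pos.2 hδ)
  refine tendsto_measureReal_one_of_subset (Eventually.of_forall fun n ω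
    (hω : Real.sqrt n * (X n ω - θ0) ≤ Real.sqrt n * (δ - θ0) - q / c) => ?_)
    (tendsto_measureReal_le_of_tendsto_atTop hF hX ha)
  have hqω : q ≤ Real.sqrt n * (δ - X n ω) * c := by
    rw [← div_le_iff₀ hc]
    linarith
  exact hq.trans (monotone_stdNormCDF hqω)

/-- If √n(X_n - θ0) converges in distribution to N(0, σ²) (expressed via convergence of the
CDFs), δ > θ0, γ ∈ (0,1), and c > 0, then the power
π_n = Pr(Φ(√n(δ - X_n)c) ≥ γ) tends to 1. -/
theorem power_consistency_one_sided
    {Ω : Type*} [MeasurableSpace Ω] (μ : Measure Ω) [IsProbabilityMeasure μ]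
    (X : ℕ → Ω → ℝ) (θ0 δ σ γ c : ℝ) (hσ : 0 < σ) (hδ : θ0 < δ)
    (hγ0 : 0 < γ) (hγ1 : γ < 1) (hc : 0 < c)
    (hX : ∀ x : ℝ,
      Tendsto (fun n : ℕ => (μ {ω | Real.sqrt n * (X n ω - θ0) ≤ x}).toReal) atTop
        (nhds (stdNormCDF (x / σ)))) :
    Tendsto (fun n : ℕ =>
        (μ {ω | γ ≤ stdNormCDF (Real.sqrt n * (δ - X n ω) * c)}).toReal) atTop (nhds 1) :=
  power_consistency_one_sided_general μ X θ0 δ σ γ c hσ hδ hγ1 hc hX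
end
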